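/- arXiv:1702.07028 — 4 statements merged into one kernel-verified Lean document; each statement's English description precedes it below -/
import Mathlib

section
/- Let f : ℝⁿ → ℝ be radial, f(x) = f₁(‖x‖), with f₁ sufficiently smooth. Then for every integer k with 1 ≤ k ≤ n/4 + 1, there exist coefficients c_{i,j} with Σ_{i,j} |c_{i,j}| ≤ 5^k such that for x ≠ 0 with r = ‖x‖, ((I−Δ)^k f)(x) = Σ_{0 ≤ i ≤ 2k, 0 ≤ j ≤ max(0, 2k−1), i+j ≤ 2k} c_{i,j} n^j f₁^{(i)}(r) / r^j. -/
open MeasureTheory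

/-- The Laplacian `Δf(x) = Σᵢ ∂²f/∂xᵢ²(x)` on `ℝⁿ`. -/
noncomputable def lap {n : ℕ} (f : EuclideanSpace ℝ (Fin n) → ℝ)
    (x : EuclideanSpace ℝ (Fin n)) : ℝ :=
  ∑ i : Fin n, iteratedFDeriv ℝ 2 f x (fun _ => EuclideanSpace.single i 1)

/-- The operator `I - Δ`. -/
noncomputable def oneSubLap {n : ℕ} (f : EuclideanSpace ℝ (Fin n) → ℝ) :
    EuclideanSpace ℝ (Fin n) → ℝ :=
  fun x => f x - lap f x

open Finset

section Aux

lemma sum_shift (F : ℕ → ℝ) (N a : ℕ) (h0 : ∀ i, i < a → F i = 0)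
    (hN : ∀ i, N ≤ i → F i = 0) :
    ∑ i ∈ range N, F (i + a) = ∑ i ∈ range N, F i := by
  have h1 : ∑ i ∈ range N, F (i + a) = ∑ i ∈ Finset.Ico a (a + N), F i := by
    rw [Finset.sum_Ico_eq_sum_range]
    simp only [Nat.add_sub_cancel_left]
    exact Finset.sum_congr rfl fun i _ => by rw [Nat.add_comm]
  have h2 : ∑ i ∈ range a, F i + ∑ i ∈ Finset.Ico a (a + N), F i = ∑ i ∈ range (a + N), F i :=
    Finset.sum_range_add_sum_Ico F (Nat.le_add_right a N)
  have h3 : ∑ i ∈ range a, F i = 0 := Finset.sum_eq_zero fun i hi => h0 i (mem_range.mp hi)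
  have h4 : ∑ i ∈ range (a + N), F i = ∑ i ∈ range N, F i := by
    rw [← Finset.sum_subset (Finset.range_subset_range.mpr (Nat.le_add_left N a))]
    intro i _ hi
    exact hN i (le_of_not_gt (fun h => hi (mem_range.mpr h)))
  rw [h3, zero_add] at h2
  rw [h1, h2, h4]

lemma sq_shift (N a b : ℕ) (c w : ℕ → ℕ → ℝ)
    (hc : ∀ i j, N - a ≤ i ∨ N - b ≤ j → c i j = 0) :
    ∑ p ∈ range N ×ˢ range N,
        (if a ≤ p.1 ∧ b ≤ p.2 then c (p.1 - a) (p.2 - b) * w p.1 p.2 else 0)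
      = ∑ p ∈ range N ×ˢ range N, c p.1 p.2 * w (p.1 + a) (p.2 + b) := by
  rw [Finset.sum_product, Finset.sum_product]
  have inner : ∀ i : ℕ,
      (∑ j ∈ range N, (if a ≤ i ∧ b ≤ j then c (i - a) (j - b) * w i j else 0))
        = ∑ j ∈ range N, (if a ≤ i then c (i - a) j * w i (j + b) else 0) := by
    intro i
    rw [← sum_shift (fun j => if a ≤ i ∧ b ≤ j then c (i - a) (j - b) * w i j else 0) N b
      (fun j hj => by simp [Nat.not_le.mpr hj])
      (fun j hj => by
        by_cases h : a ≤ i ∧ b ≤ j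
        · simp only [h, and_self, if_true]
          rw [hc (i - a) (j - b) (Or.inr (by omega)), zero_mul]
        · simp [h])]
    apply Finset.sum_congr rfl
    intro j _
    by_cases hai : a ≤ i
    · simp [hai, Nat.le_add_left, Nat.add_sub_cancel]
    · simp [hai]
  calc ∑ i ∈ range N, ∑ j ∈ range N,
          (if a ≤ i ∧ b ≤ j then c (i - a) (j - b) * w i j else 0)
      = ∑ i ∈ range N, ∑ j ∈ range N, (if a ≤ i then c (i - a) j * w i (j + b) else 0) :=
        Finset.sum_congr rfl fun i _ => inner i
    _ = ∑ i ∈ range N, ∑ j ∈ range N, c i j * w (i + a) (j + b) := by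
        rw [← sum_shift (fun i => ∑ j ∈ range N, (if a ≤ i then c (i - a) j * w i (j + b) else 0))
          N a
          (fun i hi => Finset.sum_eq_zero fun j _ => by simp [Nat.not_le.mpr hi])
          (fun i hi => Finset.sum_eq_zero fun j _ => by
            by_cases h : a ≤ i
            · simp only [h, if_true]
              rw [hc (i - a) j (Or.inl (by omega)), zero_mul]
            · simp [h])]
        apply Finset.sum_congr rfl
        intro i _
        apply Finset.sum_congr rfl
        intro j _
        simp [Nat.le_add_left, Nat.add_sub_cancel]

local notation "E" n => EuclideanSpace ℝ (Fin n)

lemma radial_hasFDerivAt {n : ℕ} (φ : ℝ → ℝ) (d : ℝ) (y : E n) (hy : y ≠ 0)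
    (hd : HasDerivAt φ d ‖y‖) :
    HasFDerivAt (fun z : E n => φ ‖z‖) ((d / ‖y‖) • (innerSL ℝ y)) y := by
  have hr : (0:ℝ) < ‖y‖ := norm_pos_iff.mpr hy
  have hsq : HasFDerivAt (fun z : E n => ‖z‖ ^ 2) (2 • (innerSL ℝ y)) y := by
    simpa using (hasFDerivAt_id y).norm_sq
  have hsqrt : HasDerivAt Real.sqrt (1 / (2 * Real.sqrt (‖y‖ ^ 2))) (‖y‖ ^ 2) :=
    Real.hasDerivAt_sqrt (by positivity)
  have hval : Real.sqrt (‖y‖ ^ 2) = ‖y‖ := Real.sqrt_sq (norm_nonneg y)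
  have hφ : HasDerivAt φ d (Real.sqrt (‖y‖ ^ 2)) := by rw [hval]; exact hd
  have hcomp := (hφ.comp _ hsqrt).comp_hasFDerivAt y hsq
  have heq : (φ ∘ Real.sqrt) ∘ (fun z : E n => ‖z‖ ^ 2) = fun z : E n => φ ‖z‖ :=
    funext fun z => by simp [Real.sqrt_sq (norm_nonneg z)]
  rw [heq] at hcomp
  refine hcomp.congr_fderiv ?_
  rw [hval]
  ext v
  simp [smul_smul]
  rw [div_eq_mul_inv]
  ring

lemma lap_radial {n : ℕ} (G G' G'' : ℝ → ℝ)
    (hG' : ∀ r : ℝ, r ≠ 0 → HasDerivAt G (G' r) r)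
    (hG'' : ∀ r : ℝ, r ≠ 0 → HasDerivAt G' (G'' r) r)
    (g : EuclideanSpace ℝ (Fin n) → ℝ) (hg : ∀ y : E n, y ≠ 0 → g y = G ‖y‖)
    (x : EuclideanSpace ℝ (Fin n)) (hx : x ≠ 0) :
    lap g x = G'' ‖x‖ + (n - 1) * G' ‖x‖ / ‖x‖ := by
  have hr : (0:ℝ) < ‖x‖ := norm_pos_iff.mpr hx
  have hr' : ‖x‖ ≠ 0 := ne_of_gt hr
  set r := ‖x‖ with hrdef
  set H : ℝ → ℝ := fun s => G' s / s with hH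
  have hUopen : IsOpen {y : E n | y ≠ 0} := isOpen_compl_singleton
  have hUx : {y : E n | y ≠ 0} ∈ nhds x := hUopen.mem_nhds hx
  have step1 : ∀ y : E n, y ≠ 0 → HasFDerivAt g ((H ‖y‖) • (innerSL ℝ y)) y := by
    intro y hy
    have hny : ‖y‖ ≠ 0 := norm_ne_zero_iff.mpr hy
    have h0 : HasFDerivAt (fun z : E n => G ‖z‖) ((G' ‖y‖ / ‖y‖) • (innerSL ℝ y)) y :=
      radial_hasFDerivAt G (G' ‖y‖) y hy (hG' _ hny)
    have hev : g =ᶠ[nhds y] fun z : E n => G ‖z‖ := by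
      filter_upwards [hUopen.mem_nhds hy] with z hz using hg z hz
    exact h0.congr_of_eventuallyEq hev
  let B : (E n) →L[ℝ] (E n) →L[ℝ] ℝ := innerSL ℝ
  have hdH : HasDerivAt H ((G'' r * r - G' r * 1) / r ^ 2) r :=
    (hG'' r hr').div (hasDerivAt_id r) hr'
  have hc : HasFDerivAt (fun y : E n => H ‖y‖)
      ((((G'' r * r - G' r * 1) / r ^ 2) / r) • (innerSL ℝ x)) x :=
    radial_hasFDerivAt H _ x hx hdH
  have hlin : HasFDerivAt (fun y : E n => (innerSL ℝ y : (E n) →L[ℝ] ℝ))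
      B x := B.hasFDerivAt
  have hF : HasFDerivAt (fun y : E n => (H ‖y‖) • (innerSL ℝ y))
      ((H r) • B +
        ((((G'' r * r - G' r * 1) / r ^ 2) / r) • (innerSL ℝ x)).smulRight (innerSL ℝ x)) x :=
    hc.smul hlin
  have hev2 : (fderiv ℝ g) =ᶠ[nhds x] fun y : E n => (H ‖y‖) • (innerSL ℝ y) := by
    filter_upwards [hUx] with y hy using (step1 y hy).fderiv
  have hF2 : HasFDerivAt (fderiv ℝ g)
      ((H r) • B +
        ((((G'' r * r - G' r * 1) / r ^ 2) / r) • (innerSL ℝ x)).smulRight (innerSL ℝ x)) x :=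
    hF.congr_of_eventuallyEq hev2
  have hfd : fderiv ℝ (fderiv ℝ g) x =
      (H r) • B +
        ((((G'' r * r - G' r * 1) / r ^ 2) / r) • (innerSL ℝ x)).smulRight (innerSL ℝ x) :=
    hF2.fderiv
  have hsum : ∑ i : Fin n, (x i) * (x i) = r ^ 2 := by
    have h1 : (inner ℝ x x : ℝ) = ‖x‖ ^ 2 := real_inner_self_eq_norm_sq x
    rw [← h1, PiLp.inner_apply]
    rfl
  unfold lap
  have hterm : ∀ i : Fin n,
      iteratedFDeriv ℝ 2 g x (fun _ => EuclideanSpace.single i 1) =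
        H r + (((G'' r * r - G' r * 1) / r ^ 2) / r) * (x i) * (x i) := by
    intro i
    rw [iteratedFDeriv_two_apply, hfd]
    have h1 : (inner ℝ x (EuclideanSpace.single i (1:ℝ)) : ℝ) = x i := by
      rw [EuclideanSpace.inner_single_right]; simp
    have h2 : (inner ℝ (EuclideanSpace.single i (1:ℝ)) (EuclideanSpace.single i (1:ℝ)) : ℝ) = 1 := by
      rw [EuclideanSpace.inner_single_right]; simp [EuclideanSpace.single_apply]
    simp only [ContinuousLinearMap.add_apply, ContinuousLinearMap.smul_apply,
      ContinuousLinearMap.smulRight_apply, innerSL_apply_apply, h1, h2]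
    simp only [smul_eq_mul]
    have hB : (B (EuclideanSpace.single i (1:ℝ))) (EuclideanSpace.single i 1) = (1:ℝ) := by
      show (inner ℝ (EuclideanSpace.single i (1:ℝ)) (EuclideanSpace.single i (1:ℝ)) : ℝ) = 1
      exact h2
    rw [hB]
    ring
  rw [Finset.sum_congr rfl (fun i _ => hterm i)]
  rw [Finset.sum_add_distrib]
  simp only [Finset.sum_const, Finset.card_univ, Fintype.card_fin, nsmul_eq_mul]
  have : ∑ i : Fin n, (((G'' r * r - G' r * 1) / r ^ 2) / r) * (x i) * (x i)
      = (((G'' r * r - G' r * 1) / r ^ 2) / r) * r ^ 2 := by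
    rw [← hsum, Finset.mul_sum]
    exact Finset.sum_congr rfl fun i _ => by ring
  rw [this, hH]
  field_simp
  ring

/-- the sum `Σ c_{ij} n^j f₁^{(i)}(s) s^{-j}`. -/
noncomputable def valG (n N : ℕ) (c : ℕ → ℕ → ℝ) (f₁ : ℝ → ℝ) (s : ℝ) : ℝ :=
  ∑ p ∈ range N ×ˢ range N,
    c p.1 p.2 * (n:ℝ) ^ p.2 * (iteratedDeriv p.1 f₁ s * s ^ (-(p.2:ℤ)))

noncomputable def valG1 (n N : ℕ) (c : ℕ → ℕ → ℝ) (f₁ : ℝ → ℝ) (s : ℝ) : ℝ :=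
  ∑ p ∈ range N ×ˢ range N,
    c p.1 p.2 * (n:ℝ) ^ p.2 *
      (iteratedDeriv (p.1 + 1) f₁ s * s ^ (-(p.2:ℤ)) +
        ((-(p.2:ℤ)):ℝ) * (iteratedDeriv p.1 f₁ s * s ^ (-(p.2:ℤ) - 1)))

noncomputable def valG2 (n N : ℕ) (c : ℕ → ℕ → ℝ) (f₁ : ℝ → ℝ) (s : ℝ) : ℝ :=
  ∑ p ∈ range N ×ˢ range N,
    c p.1 p.2 * (n:ℝ) ^ p.2 *
      ((iteratedDeriv (p.1 + 1 + 1) f₁ s * s ^ (-(p.2:ℤ)) +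
          ((-(p.2:ℤ)):ℝ) * (iteratedDeriv (p.1 + 1) f₁ s * s ^ (-(p.2:ℤ) - 1))) +
        ((-(p.2:ℤ)):ℝ) *
          (iteratedDeriv (p.1 + 1) f₁ s * s ^ (-(p.2:ℤ) - 1) +
            ((-(p.2:ℤ) - 1:ℤ):ℝ) * (iteratedDeriv p.1 f₁ s * s ^ (-(p.2:ℤ) - 1 - 1))))

/-- the coefficients after applying `I - Δ` once. -/
noncomputable def stepCoeff (n : ℕ) (c : ℕ → ℕ → ℝ) : ℕ → ℕ → ℝ := fun i j =>
  c i j - (if 2 ≤ i ∧ 0 ≤ j then c (i - 2) (j - 0) else 0)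
    + (if 1 ≤ i ∧ 1 ≤ j then
        ((2 * ((j:ℝ) - 1) + 1 - (n:ℝ)) / (n:ℝ)) * (c (i - 1) (j - 1)) else 0)
    + (if 0 ≤ i ∧ 2 ≤ j then
        ((((j:ℝ) - 2) * ((n:ℝ) - ((j:ℝ) - 2) - 2)) / (n:ℝ) ^ 2) * (c (i - 0) (j - 2)) else 0)

variable {f₁ : ℝ → ℝ}

lemma termD (hf₁ : ContDiff ℝ (⊤ : ℕ∞) f₁) (i : ℕ) (r : ℝ) :
    HasDerivAt (iteratedDeriv i f₁) (iteratedDeriv (i + 1) f₁ r) r := by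
  have h : ContDiff ℝ (⊤ : ℕ∞) (iteratedDeriv i f₁) := by
    rw [iteratedDeriv_eq_iterate]; exact hf₁.iterate_deriv i
  rw [iteratedDeriv_succ]
  exact ((h.differentiable (by simp)) r).hasDerivAt

lemma hasDerivAt_F (hf₁ : ContDiff ℝ (⊤ : ℕ∞) f₁) (i : ℕ) (m : ℤ) (r : ℝ) (hr : r ≠ 0) :
    HasDerivAt (fun s => iteratedDeriv i f₁ s * s ^ m)
      (iteratedDeriv (i + 1) f₁ r * r ^ m + ((m:ℝ)) * (iteratedDeriv i f₁ r * r ^ (m - 1))) r := by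
  have h := (termD hf₁ i r).mul (hasDerivAt_zpow m r (Or.inl hr))
  refine h.congr_deriv ?_
  ring

lemma hasDerivAt_valG {n N : ℕ} (hf₁ : ContDiff ℝ (⊤ : ℕ∞) f₁) (c : ℕ → ℕ → ℝ)
    (s : ℝ) (hs : s ≠ 0) :
    HasDerivAt (valG n N c f₁) (valG1 n N c f₁ s) s := by
  unfold valG valG1
  apply HasDerivAt.fun_sum
  intro p _
  have h := (hasDerivAt_F hf₁ p.1 (-(p.2:ℤ)) s hs).const_mul (c p.1 p.2 * (n:ℝ) ^ p.2)
  refine h.congr_deriv ?_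
  push_cast
  ring

lemma hasDerivAt_valG1 {n N : ℕ} (hf₁ : ContDiff ℝ (⊤ : ℕ∞) f₁) (c : ℕ → ℕ → ℝ)
    (s : ℝ) (hs : s ≠ 0) :
    HasDerivAt (valG1 n N c f₁) (valG2 n N c f₁ s) s := by
  unfold valG1 valG2
  apply HasDerivAt.fun_sum
  intro p _
  have h := ((hasDerivAt_F hf₁ (p.1 + 1) (-(p.2:ℤ)) s hs).add
    ((hasDerivAt_F hf₁ p.1 (-(p.2:ℤ) - 1) s hs).const_mul ((-(p.2:ℤ)):ℝ))).const_mul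
    (c p.1 p.2 * (n:ℝ) ^ p.2)
  refine h.congr_deriv ?_
  push_cast
  ring

end Aux

section Step

variable {f₁ : ℝ → ℝ}

lemma step_lemma {n N : ℕ} (hn : 0 < n) (hf₁ : ContDiff ℝ (⊤ : ℕ∞) f₁)
    (c : ℕ → ℕ → ℝ) (g : EuclideanSpace ℝ (Fin n) → ℝ)
    (hg : ∀ y : EuclideanSpace ℝ (Fin n), y ≠ 0 → g y = valG n N c f₁ ‖y‖)
    (hsupp : ∀ i j : ℕ, N - 2 ≤ i ∨ N - 2 ≤ j → c i j = 0)
    (x : EuclideanSpace ℝ (Fin n)) (hx : x ≠ 0) :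
    oneSubLap g x = valG n N (stepCoeff n c) f₁ ‖x‖ := by
  have hr' : ‖x‖ ≠ 0 := norm_ne_zero_iff.mpr hx
  have hn' : (n:ℝ) ≠ 0 := Nat.cast_ne_zero.mpr hn.ne'
  have hlap := lap_radial (valG n N c f₁) (valG1 n N c f₁) (valG2 n N c f₁)
    (fun s hs => hasDerivAt_valG hf₁ c s hs) (fun s hs => hasDerivAt_valG1 hf₁ c s hs)
    g hg x hx
  have h1 : oneSubLap g x = valG n N c f₁ ‖x‖ -
      (valG2 n N c f₁ ‖x‖ + ((n:ℝ) - 1) * valG1 n N c f₁ ‖x‖ / ‖x‖) := by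
    show g x - lap g x = _
    rw [hg x hx, hlap]
  rw [h1]
  have key : ∀ s : ℝ, s ≠ 0 →
      valG n N c f₁ s - (valG2 n N c f₁ s + ((n:ℝ) - 1) * valG1 n N c f₁ s / s)
        = valG n N (stepCoeff n c) f₁ s := by
    intro s hs
    -- split the RHS coefficientwise into four sums
    have hRHS : valG n N (stepCoeff n c) f₁ s
        = valG n N c f₁ s
          - (∑ p ∈ range N ×ˢ range N, (if 2 ≤ p.1 ∧ 0 ≤ p.2 then
              c (p.1 - 2) (p.2 - 0) *
                ((n:ℝ) ^ p.2 *
                  (iteratedDeriv p.1 f₁ s * s ^ (-(p.2:ℤ)))) else 0))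
          + (∑ p ∈ range N ×ˢ range N, (if 1 ≤ p.1 ∧ 1 ≤ p.2 then
              c (p.1 - 1) (p.2 - 1) *
                (((2 * ((p.2:ℝ) - 1) + 1 - (n:ℝ)) / (n:ℝ)) * ((n:ℝ) ^ p.2 *
                  (iteratedDeriv p.1 f₁ s * s ^ (-(p.2:ℤ))))) else 0))
          + (∑ p ∈ range N ×ˢ range N, (if 0 ≤ p.1 ∧ 2 ≤ p.2 then
              c (p.1 - 0) (p.2 - 2) *
                (((((p.2:ℝ) - 2) * ((n:ℝ) - ((p.2:ℝ) - 2) - 2)) / (n:ℝ) ^ 2) * ((n:ℝ) ^ p.2 *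
                  (iteratedDeriv p.1 f₁ s * s ^ (-(p.2:ℤ))))) else 0)) := by
      unfold valG stepCoeff
      rw [← Finset.sum_sub_distrib, ← Finset.sum_add_distrib, ← Finset.sum_add_distrib]
      apply Finset.sum_congr rfl
      intro p _
      split_ifs <;> ring
    rw [hRHS]
    rw [sq_shift N 2 0 c
          (fun i j => ((n:ℝ) ^ j * (iteratedDeriv i f₁ s * s ^ (-(j:ℤ)))))
          (fun i j h => hsupp i j (by omega)),
      sq_shift N 1 1 c
          (fun i j => (((2 * ((j:ℝ) - 1) + 1 - (n:ℝ)) / (n:ℝ)) *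
            ((n:ℝ) ^ j * (iteratedDeriv i f₁ s * s ^ (-(j:ℤ))))))
          (fun i j h => hsupp i j (by omega)),
      sq_shift N 0 2 c
          (fun i j => (((((j:ℝ) - 2) * ((n:ℝ) - ((j:ℝ) - 2) - 2)) / (n:ℝ) ^ 2) *
            ((n:ℝ) ^ j * (iteratedDeriv i f₁ s * s ^ (-(j:ℤ))))))
          (fun i j h => hsupp i j (by omega))]
    unfold valG valG1 valG2
    rw [Finset.mul_sum, Finset.sum_div, ← Finset.sum_add_distrib, ← Finset.sum_sub_distrib,
      ← Finset.sum_sub_distrib, ← Finset.sum_add_distrib, ← Finset.sum_add_distrib]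
    apply Finset.sum_congr rfl
    rintro ⟨i, j⟩ _
    simp only [Nat.add_zero, Nat.sub_zero]
    push_cast
    have E1 : s ^ (-(j:ℤ) - 1) = s ^ (-(j:ℤ) - 1 - 1) * s := by
      rw [← zpow_add_one₀ hs (-(j:ℤ) - 1 - 1)]; congr 1; ring
    have E0 : s ^ (-(j:ℤ)) = s ^ (-(j:ℤ) - 1 - 1) * s * s := by
      rw [← zpow_add_one₀ hs, ← zpow_add_one₀ hs]; congr 1; ring
    have E3 : s ^ (-((j:ℤ) + 1)) = s ^ (-(j:ℤ) - 1 - 1) * s := by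
      rw [← zpow_add_one₀ hs (-(j:ℤ) - 1 - 1)]; congr 1; ring
    have E4 : s ^ (-((j:ℤ) + 2)) = s ^ (-(j:ℤ) - 1 - 1) := by
      congr 1; ring
    rw [E0, E1, E3, E4]
    field_simp
    ring
  rw [key ‖x‖ hr']

end Step

section Main

variable {f₁ : ℝ → ℝ}

lemma valG_mono {n : ℕ} (c : ℕ → ℕ → ℝ) (f₁ : ℝ → ℝ) {N N' : ℕ} (h : N ≤ N')
    (hz : ∀ i j, N ≤ i ∨ N ≤ j → c i j = 0) (s : ℝ) :
    valG n N c f₁ s = valG n N' c f₁ s := by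
  unfold valG
  apply Finset.sum_subset
  · exact Finset.product_subset_product (range_subset_range.mpr h) (range_subset_range.mpr h)
  · intro p hp hnp
    have hp' := Finset.mem_product.mp hp
    have h1 : c p.1 p.2 = 0 := by
      apply hz
      have hnotin : ¬(p.1 < N ∧ p.2 < N) := by
        intro hq
        exact hnp (Finset.mem_product.mpr ⟨mem_range.mpr hq.1, mem_range.mpr hq.2⟩)
      have m1 := mem_range.mp hp'.1
      have m2 := mem_range.mp hp'.2
      omega
    rw [h1, zero_mul, zero_mul]

lemma abs_sum_mono (c : ℕ → ℕ → ℝ) {N N' : ℕ} (h : N ≤ N')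
    (hz : ∀ i j, N ≤ i ∨ N ≤ j → c i j = 0) :
    ∑ p ∈ range N' ×ˢ range N', |c p.1 p.2| = ∑ p ∈ range N ×ˢ range N, |c p.1 p.2| := by
  symm
  apply Finset.sum_subset
  · exact Finset.product_subset_product (range_subset_range.mpr h) (range_subset_range.mpr h)
  · intro p hp hnp
    have hp' := Finset.mem_product.mp hp
    have h1 : c p.1 p.2 = 0 := by
      apply hz
      have hnotin : ¬(p.1 < N ∧ p.2 < N) := by
        intro hq
        exact hnp (Finset.mem_product.mpr ⟨mem_range.mpr hq.1, mem_range.mpr hq.2⟩)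
      have m1 := mem_range.mp hp'.1
      have m2 := mem_range.mp hp'.2
      omega
    rw [h1, abs_zero]

lemma main_aux {n : ℕ} (hn : 0 < n) (hf₁ : ContDiff ℝ (⊤ : ℕ∞) f₁)
    (f : EuclideanSpace ℝ (Fin n) → ℝ) (hf : ∀ x, f x = f₁ ‖x‖) :
    ∀ m : ℕ, 4 * m ≤ n + 4 →
      ∃ c : ℕ → ℕ → ℝ,
        (∀ i j, c i j ≠ 0 → i + j ≤ 2 * m ∧ j ≤ max 0 (2 * m - 1)) ∧
        (∑ p ∈ range (2*m+3) ×ˢ range (2*m+3), |c p.1 p.2|) ≤ 4 ^ m ∧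
        ∀ x : EuclideanSpace ℝ (Fin n), x ≠ 0 →
          oneSubLap^[m] f x = valG n (2*m+3) c f₁ ‖x‖ := by
  intro m
  induction m with
  | zero =>
    intro _
    refine ⟨fun i j => if i = 0 ∧ j = 0 then 1 else 0, ?_, ?_, ?_⟩
    · intro i j hc
      by_cases h : i = 0 ∧ j = 0
      · omega
      · simp [h] at hc
    · rw [Finset.sum_eq_single ((0:ℕ), (0:ℕ))]
      · norm_num
      · intro p _ hne
        have : ¬(p.1 = 0 ∧ p.2 = 0) := by
          intro h; exact hne (Prod.ext h.1 h.2)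
        simp [this]
      · intro h
        exact absurd (Finset.mem_product.mpr ⟨mem_range.mpr (by omega), mem_range.mpr (by omega)⟩) h
    · intro x hx
      rw [Function.iterate_zero_apply, hf x]
      unfold valG
      rw [Finset.sum_eq_single ((0:ℕ), (0:ℕ))]
      · simp [iteratedDeriv_zero]
      · intro p _ hne
        have : ¬(p.1 = 0 ∧ p.2 = 0) := by
          intro h; exact hne (Prod.ext h.1 h.2)
        simp [this]
      · intro h
        exact absurd (Finset.mem_product.mpr ⟨mem_range.mpr (by omega), mem_range.mpr (by omega)⟩) h
  | succ m IH =>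
    intro hm4
    obtain ⟨c, hsupp, hbound, hval⟩ := IH (by omega)
    have h4 : 4 * m ≤ n := by omega
    have hn' : (0:ℝ) < (n:ℝ) := by exact_mod_cast hn
    have hzero : ∀ i j, 2*m+1 ≤ i ∨ 2*m+1 ≤ j → c i j = 0 := by
      intro i j h
      by_contra hc
      have := hsupp i j hc
      rw [Nat.zero_max] at this
      omega
    set N := 2*(m+1)+3 with hN
    have hsupp' : ∀ i j, N - 2 ≤ i ∨ N - 2 ≤ j → c i j = 0 := by
      intro i j h; exact hzero i j (by omega)
    have hg : ∀ y : EuclideanSpace ℝ (Fin n), y ≠ 0 →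
        oneSubLap^[m] f y = valG n N c f₁ ‖y‖ := by
      intro y hy
      rw [hval y hy]
      exact valG_mono c f₁ (by omega) (fun i j h => hzero i j (by omega)) ‖y‖
    have hstep := step_lemma hn hf₁ c (oneSubLap^[m] f) hg hsupp'
    refine ⟨stepCoeff n c, ?_, ?_, ?_⟩
    · -- support
      intro i j hne
      rw [Nat.zero_max]
      by_contra hcon
      apply hne
      have hc1 : c i j = 0 := by
        by_contra h
        have := hsupp i j h
        rw [Nat.zero_max] at this
        omega
      have hc2 : (if 2 ≤ i ∧ 0 ≤ j then c (i - 2) (j - 0) else 0) = 0 := by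
        split_ifs with h2
        · by_contra h
          have := hsupp (i-2) (j-0) h
          rw [Nat.zero_max] at this
          omega
        · rfl
      have hc3 : (if 1 ≤ i ∧ 1 ≤ j then
          ((2 * ((j:ℝ) - 1) + 1 - (n:ℝ)) / (n:ℝ)) * (c (i - 1) (j - 1)) else 0) = 0 := by
        split_ifs with h2
        · have : c (i-1) (j-1) = 0 := by
            by_contra h
            have := hsupp (i-1) (j-1) h
            rw [Nat.zero_max] at this
            omega
          rw [this, mul_zero]
        · rfl
      have hc4 : (if 0 ≤ i ∧ 2 ≤ j then
          ((((j:ℝ) - 2) * ((n:ℝ) - ((j:ℝ) - 2) - 2)) / (n:ℝ) ^ 2) * (c (i - 0) (j - 2))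
          else 0) = 0 := by
        split_ifs with h2
        · rcases eq_or_ne j 2 with rfl | hj2
          · norm_num
          · have : c (i-0) (j-2) = 0 := by
              by_contra h
              have := hsupp (i-0) (j-2) h
              rw [Nat.zero_max] at this
              omega
            rw [this, mul_zero]
        · rfl
      unfold stepCoeff
      rw [hc1, hc2, hc3, hc4]
      ring
    · -- bound
      have hA : ∑ p ∈ range N ×ˢ range N, |c p.1 p.2| ≤ 4 ^ m := by
        rw [abs_sum_mono c (show 2*m+3 ≤ N by omega) (fun i j h => hzero i j (by omega))]
        exact hbound
      have htri : ∀ p : ℕ × ℕ, p ∈ range N ×ˢ range N →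
          |stepCoeff n c p.1 p.2| ≤
            |c p.1 p.2|
            + (if 2 ≤ p.1 ∧ 0 ≤ p.2 then |c (p.1 - 2) (p.2 - 0)| * 1 else 0)
            + (if 1 ≤ p.1 ∧ 1 ≤ p.2 then
                |c (p.1 - 1) (p.2 - 1)| * |(2 * ((p.2:ℝ) - 1) + 1 - (n:ℝ)) / (n:ℝ)| else 0)
            + (if 0 ≤ p.1 ∧ 2 ≤ p.2 then
                |c (p.1 - 0) (p.2 - 2)| *
                  |(((p.2:ℝ) - 2) * ((n:ℝ) - ((p.2:ℝ) - 2) - 2)) / (n:ℝ) ^ 2| else 0) := by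
        rintro ⟨i, j⟩ _
        unfold stepCoeff
        simp only
        have t1 := abs_add_le (c i j - (if 2 ≤ i ∧ 0 ≤ j then c (i - 2) (j - 0) else 0)
            + (if 1 ≤ i ∧ 1 ≤ j then
              ((2 * ((j:ℝ) - 1) + 1 - (n:ℝ)) / (n:ℝ)) * (c (i - 1) (j - 1)) else 0))
          (if 0 ≤ i ∧ 2 ≤ j then
              ((((j:ℝ) - 2) * ((n:ℝ) - ((j:ℝ) - 2) - 2)) / (n:ℝ) ^ 2) * (c (i - 0) (j - 2))
            else 0)
        have t2 := abs_add_le (c i j - (if 2 ≤ i ∧ 0 ≤ j then c (i - 2) (j - 0) else 0))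
          (if 1 ≤ i ∧ 1 ≤ j then
              ((2 * ((j:ℝ) - 1) + 1 - (n:ℝ)) / (n:ℝ)) * (c (i - 1) (j - 1)) else 0)
        have t3 := abs_sub (c i j) (if 2 ≤ i ∧ 0 ≤ j then c (i - 2) (j - 0) else 0)
        have e2 : |(if 2 ≤ i ∧ 0 ≤ j then c (i - 2) (j - 0) else 0)|
            = (if 2 ≤ i ∧ 0 ≤ j then |c (i - 2) (j - 0)| * 1 else 0) := by
          split_ifs <;> simp
        have e3 : |(if 1 ≤ i ∧ 1 ≤ j then
              ((2 * ((j:ℝ) - 1) + 1 - (n:ℝ)) / (n:ℝ)) * (c (i - 1) (j - 1)) else 0)|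
            = (if 1 ≤ i ∧ 1 ≤ j then
              |c (i - 1) (j - 1)| * |(2 * ((j:ℝ) - 1) + 1 - (n:ℝ)) / (n:ℝ)| else 0) := by
          split_ifs <;> simp [abs_mul, mul_comm]
        have e4 : |(if 0 ≤ i ∧ 2 ≤ j then
              ((((j:ℝ) - 2) * ((n:ℝ) - ((j:ℝ) - 2) - 2)) / (n:ℝ) ^ 2) * (c (i - 0) (j - 2))
              else 0)|
            = (if 0 ≤ i ∧ 2 ≤ j then
              |c (i - 0) (j - 2)| *
                |(((j:ℝ) - 2) * ((n:ℝ) - ((j:ℝ) - 2) - 2)) / (n:ℝ) ^ 2| else 0) := by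
          split_ifs <;> simp [abs_mul, mul_comm]
        rw [e2] at t3
        rw [e3] at t2
        rw [e4] at t1
        linarith
      have hsum := Finset.sum_le_sum htri
      rw [Finset.sum_add_distrib, Finset.sum_add_distrib, Finset.sum_add_distrib] at hsum
      -- second piece
      have hB2 : ∑ p ∈ range N ×ˢ range N,
          (if 2 ≤ p.1 ∧ 0 ≤ p.2 then |c (p.1 - 2) (p.2 - 0)| * 1 else 0)
          = ∑ p ∈ range N ×ˢ range N, |c p.1 p.2| * 1 := by
        exact sq_shift N 2 0 (fun i j => |c i j|) (fun _ _ => 1)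
          (fun i j h => by show |c i j| = 0; rw [hsupp' i j (by omega), abs_zero])
      have hB3 : ∑ p ∈ range N ×ˢ range N,
          (if 1 ≤ p.1 ∧ 1 ≤ p.2 then
            |c (p.1 - 1) (p.2 - 1)| * |(2 * ((p.2:ℝ) - 1) + 1 - (n:ℝ)) / (n:ℝ)| else 0)
          ≤ ∑ p ∈ range N ×ˢ range N, |c p.1 p.2| := by
        rw [sq_shift N 1 1 (fun i j => |c i j|)
          (fun i j => |(2 * ((j:ℝ) - 1) + 1 - (n:ℝ)) / (n:ℝ)|)
          (fun i j h => by show |c i j| = 0; rw [hsupp' i j (by omega), abs_zero])]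
        apply Finset.sum_le_sum
        rintro ⟨i, j⟩ _
        simp only
        rcases eq_or_ne (c i j) 0 with h | h
        · simp [h]
        · have hj := (hsupp i j h).2
          rw [Nat.zero_max] at hj
          have hnat : 2*j + 1 + 1 ≤ 2*n := by omega
          apply mul_le_of_le_one_right (abs_nonneg _)
          rw [abs_div, abs_of_pos hn', div_le_one hn', abs_le]
          constructor
          · push_cast
            have : (2*(j:ℝ) + 2 : ℝ) ≤ 2*(n:ℝ) := by exact_mod_cast hnat
            linarith
          · push_cast
            have : (2*(j:ℝ) + 2 : ℝ) ≤ 2*(n:ℝ) := by exact_mod_cast hnat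
            linarith
      have hB4 : ∑ p ∈ range N ×ˢ range N,
          (if 0 ≤ p.1 ∧ 2 ≤ p.2 then
            |c (p.1 - 0) (p.2 - 2)| *
              |(((p.2:ℝ) - 2) * ((n:ℝ) - ((p.2:ℝ) - 2) - 2)) / (n:ℝ) ^ 2| else 0)
          ≤ ∑ p ∈ range N ×ˢ range N, |c p.1 p.2| := by
        rw [sq_shift N 0 2 (fun i j => |c i j|)
          (fun i j => |(((j:ℝ) - 2) * ((n:ℝ) - ((j:ℝ) - 2) - 2)) / (n:ℝ) ^ 2|)
          (fun i j h => by show |c i j| = 0; rw [hsupp' i j (by omega), abs_zero])]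
        apply Finset.sum_le_sum
        rintro ⟨i, j⟩ _
        simp only
        rcases eq_or_ne (c i j) 0 with h | h
        · simp [h]
        · have hj := (hsupp i j h).2
          rw [Nat.zero_max] at hj
          apply mul_le_of_le_one_right (abs_nonneg _)
          have hc1 : ((((j+2:ℕ)):ℝ) - 2) = (j:ℝ) := by push_cast; ring
          rcases Nat.eq_zero_or_pos j with rfl | hjpos
          · norm_num
          · have hnat : j + 2 ≤ n := by omega
            have hjn : (j:ℝ) + 2 ≤ (n:ℝ) := by exact_mod_cast hnat
            rw [hc1, abs_div, abs_of_pos (by positivity : (0:ℝ) < (n:ℝ)^2),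
              div_le_one (by positivity), abs_mul, abs_of_nonneg (by positivity),
              abs_of_nonneg (by linarith)]
            nlinarith [Nat.cast_nonneg (α := ℝ) j]
      have h2' : ∑ p ∈ range N ×ˢ range N,
          (if 2 ≤ p.1 ∧ 0 ≤ p.2 then |c (p.1 - 2) (p.2 - 0)| * 1 else 0) ≤ 4 ^ m := by
        rw [hB2]
        simpa using hA
      have h3' := hB3.trans hA
      have h4' := hB4.trans hA
      calc ∑ p ∈ range (2*(m+1)+3) ×ˢ range (2*(m+1)+3), |stepCoeff n c p.1 p.2|
          ≤ _ := hsum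
        _ ≤ 4 ^ m + 4 ^ m + 4 ^ m + 4 ^ m :=
            add_le_add (add_le_add (add_le_add hA h2') h3') h4'
        _ = 4 ^ (m+1) := by ring
    · -- value
      intro x hx
      rw [Function.iterate_succ_apply']
      exact hstep x hx

end Main

/-- For radial `f(x) = f₁(‖x‖)` with `f₁` smooth and `1 ≤ k ≤ n/4 + 1`, there are coefficients
`c_{i,j}` with `Σ|c_{i,j}| ≤ 5^k` such that for `x ≠ 0`, `r = ‖x‖`,
`(I-Δ)^k f (x) = Σ_{i+j ≤ 2k, i ≤ 2k, j ≤ max 0 (2k-1)} c_{i,j} n^j f₁^{(i)}(r) / r^j`. -/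
theorem oneSubLap_pow_radial (n k : ℕ) (hk : 1 ≤ k) (hkn : (k : ℝ) ≤ (n : ℝ) / 4 + 1)
    (f : EuclideanSpace ℝ (Fin n) → ℝ) (f₁ : ℝ → ℝ)
    (hf₁ : ContDiff ℝ (⊤ : ℕ∞) f₁) (hf : ∀ x, f x = f₁ ‖x‖) :
    ∃ c : ℕ → ℕ → ℝ,
      (∑ p ∈ (Finset.range (2 * k + 1) ×ˢ Finset.range (max 0 (2 * k - 1) + 1)).filter
          (fun p => p.1 + p.2 ≤ 2 * k), |c p.1 p.2|) ≤ (5 : ℝ) ^ k ∧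
      ∀ x : EuclideanSpace ℝ (Fin n), x ≠ 0 →
        (oneSubLap^[k] f) x =
          ∑ p ∈ (Finset.range (2 * k + 1) ×ˢ Finset.range (max 0 (2 * k - 1) + 1)).filter
              (fun p => p.1 + p.2 ≤ 2 * k),
            c p.1 p.2 * (n : ℝ) ^ p.2 * iteratedDeriv p.1 f₁ ‖x‖ / ‖x‖ ^ p.2 := by
  rcases Nat.eq_zero_or_pos n with rfl | hn
  · -- trivial case : the space is a single point
    refine ⟨fun _ _ => 0, ?_, ?_⟩
    · simp
    · intro x hx
      exfalso
      apply hx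
      ext i; exact i.elim0
  · have hkn' : 4 * k ≤ n + 4 := by
      have h1 : (4 * k : ℝ) ≤ (n : ℝ) + 4 := by linarith
      exact_mod_cast h1
    obtain ⟨c, hsupp, hbound, hval⟩ := main_aux hn (hf₁.of_le (by simp)) f hf k hkn'
    have hS : ∀ F : ℕ × ℕ → ℝ,
        (∀ p : ℕ × ℕ, c p.1 p.2 = 0 → F p = 0) →
        ∑ p ∈ (Finset.range (2 * k + 1) ×ˢ Finset.range (max 0 (2 * k - 1) + 1)).filter
            (fun p => p.1 + p.2 ≤ 2 * k), F p
          = ∑ p ∈ range (2*k+3) ×ˢ range (2*k+3), F p := by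
      intro F hF
      apply Finset.sum_subset
      · intro p hp
        rw [Finset.mem_filter, Finset.mem_product, mem_range, mem_range] at hp
        exact Finset.mem_product.mpr ⟨mem_range.mpr (by omega), mem_range.mpr (by omega)⟩
      · intro p hp hnp
        apply hF
        by_contra hc
        have h1 := hsupp p.1 p.2 hc
        rw [Nat.zero_max] at h1
        apply hnp
        rw [Finset.mem_filter, Finset.mem_product, mem_range, mem_range]
        refine ⟨⟨by omega, by omega⟩, by omega⟩
    refine ⟨c, ?_, ?_⟩
    · rw [hS (fun p => |c p.1 p.2|) (fun p hp => by show |c p.1 p.2| = 0; rw [hp, abs_zero])]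
      calc ∑ p ∈ range (2*k+3) ×ˢ range (2*k+3), |c p.1 p.2| ≤ (4:ℝ)^k := hbound
        _ ≤ (5:ℝ)^k := by gcongr <;> norm_num
    · intro x hx
      rw [hval x hx]
      rw [hS (fun p => c p.1 p.2 * (n : ℝ) ^ p.2 * iteratedDeriv p.1 f₁ ‖x‖ / ‖x‖ ^ p.2)
        (fun p hp => by
          show c p.1 p.2 * (n : ℝ) ^ p.2 * iteratedDeriv p.1 f₁ ‖x‖ / ‖x‖ ^ p.2 = 0
          rw [hp, zero_mul, zero_mul, zero_div])]
      unfold valG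
      apply Finset.sum_congr rfl
      intro p _
      rw [zpow_neg, zpow_natCast, div_eq_mul_inv]
      ring
end

section
/- For every integer m ≥ 2 there exists a function g : ℝ → ℝ such that: g ≥ 0 everywhere; supp(g) ⊆ [0,1]; ∫₀¹ g(x) dx = 1; g is m times continuously differentiable; and there is an absolute constant A such that for all k ≤ m and all x, |g^{(k)}(x)| ≤ A (2m)^{k+1}. -/
/-!
The bump is the uniform B-spline of order `m + 2` and step `δ = 1/(m+2)`: starting from the box
`δ⁻¹ 1_{(0,δ]}`, average `m + 1` times over windows of length `δ`. Averaging is convolution with a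
probability density, so it preserves nonnegativity, mass and the sup bound `δ⁻¹` while widening the
support by `δ`; and it gains one derivative, the difference quotient `(f x - f (x - δ)) / δ`, so each
derivative costs at most a factor `2/δ = 2(m+2)`. Finally `(1 + 2/m)^(k+1) ≤ e³` for `k ≤ m` turns
`(2(m+2))^(k+1)` into `(2m)^(k+1)`.
-/

open MeasureTheory intervalIntegral Set Real
open scoped Convolution

noncomputable def boxAvg (δ : ℝ) (f : ℝ → ℝ) (x : ℝ) : ℝ :=
  δ⁻¹ * ∫ t in (x - δ)..x, f t

noncomputable def boxSpline (δ : ℝ) : ℕ → ℝ → ℝ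
  | 0 => (Ioc 0 δ).indicator fun _ => δ⁻¹
  | j + 1 => boxAvg δ (boxSpline δ j)

noncomputable def boxKernel (δ : ℝ) : ℝ → ℝ :=
  (Ico 0 δ).indicator fun _ => δ⁻¹

theorem integrable_boxKernel (δ : ℝ) : Integrable (boxKernel δ) :=
  (integrable_indicator_iff measurableSet_Ico).2 (integrableOn_const measure_Ico_lt_top.ne)

theorem integral_boxKernel {δ : ℝ} (hδ : 0 < δ) : ∫ x, boxKernel δ x = 1 := by
  simp [boxKernel, integral_indicator_const _ measurableSet_Ico, hδ.le, hδ.ne']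

section boxAvg

variable {δ : ℝ} {f : ℝ → ℝ}

theorem boxAvg_nonneg (hδ : 0 ≤ δ) (hf : ∀ x, 0 ≤ f x) (x : ℝ) : 0 ≤ boxAvg δ f x :=
  mul_nonneg (inv_nonneg.2 hδ) (integral_nonneg (by linarith) fun t _ => hf t)

theorem boxAvg_le {M : ℝ} (hδ : 0 < δ) (hf : ∀ a b, IntervalIntegrable f volume a b)
    (hM : ∀ x, f x ≤ M) (x : ℝ) : boxAvg δ f x ≤ M := by
  have hmass : ∫ t in (x - δ)..x, f t ≤ δ * M := by
    calc ∫ t in (x - δ)..x, f t ≤ ∫ _ in (x - δ)..x, M :=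
          integral_mono_on (by linarith) (hf _ _) intervalIntegrable_const fun t _ => hM t
      _ = δ * M := by simp
  calc boxAvg δ f x ≤ δ⁻¹ * (δ * M) := mul_le_mul_of_nonneg_left hmass (inv_nonneg.2 hδ.le)
    _ = M := by field_simp

theorem support_boxAvg_subset {a b : ℝ} (hδ : 0 ≤ δ) (hf : f.support ⊆ Ioc a b) :
    (boxAvg δ f).support ⊆ Ioc a (b + δ) := by
  intro x hx
  by_contra hxab
  refine hx ?_
  have hvanish : EqOn f 0 (uIcc (x - δ) x) := by
    intro t ht
    rw [uIcc_of_le (by linarith)] at ht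
    refine Function.notMem_support.1 fun hft => hxab ?_
    have hab := hf hft
    exact ⟨by linarith [hab.1, ht.2], by linarith [hab.2, ht.1]⟩
  simp [boxAvg, integral_congr hvanish]

theorem boxAvg_eq_convolution (hδ : 0 ≤ δ) :
    boxAvg δ f = f ⋆[ContinuousLinearMap.lsmul ℝ ℝ] boxKernel δ := by
  ext x
  have hwindow : ∀ t, x - t ∈ Ico 0 δ ↔ t ∈ Ioc (x - δ) x := fun t => by
    simp only [mem_Ico, mem_Ioc]; constructor <;> intro h <;> constructor <;> linarith [h.1, h.2]
  have hintegrand : (fun t => f t • boxKernel δ (x - t)) =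
      (Ioc (x - δ) x).indicator fun t => δ⁻¹ * f t := by
    ext t
    by_cases ht : t ∈ Ioc (x - δ) x
    · simp [boxKernel, ht, (hwindow t).2 ht, mul_comm]
    · simp [boxKernel, ht, mt (hwindow t).1 ht]
  rw [convolution_lsmul, hintegrand, MeasureTheory.integral_indicator measurableSet_Ioc,
    MeasureTheory.integral_const_mul, boxAvg, integral_of_le (by linarith)]

theorem integrable_boxAvg (hδ : 0 ≤ δ) (hf : Integrable f) : Integrable (boxAvg δ f) := by
  rw [boxAvg_eq_convolution hδ]
  exact hf.integrable_convolution _ (integrable_boxKernel δ)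

theorem integral_boxAvg (hδ : 0 < δ) (hf : Integrable f) :
    ∫ x, boxAvg δ f x = ∫ x, f x := by
  rw [boxAvg_eq_convolution hδ.le, integral_convolution _ hf (integrable_boxKernel δ),
    integral_boxKernel hδ]
  simp

theorem boxAvg_eq_primitive_sub (hf : ∀ a b, IntervalIntegrable f volume a b) (x : ℝ) :
    boxAvg δ f x = δ⁻¹ * ((∫ t in (0)..x, f t) - ∫ t in (0)..(x - δ), f t) := by
  rw [boxAvg, integral_interval_sub_left (hf 0 x) (hf 0 (x - δ))]

theorem continuous_boxAvg (hf : ∀ a b, IntervalIntegrable f volume a b) :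
    Continuous (boxAvg δ f) := by
  have hF := continuous_primitive hf 0
  rw [funext (boxAvg_eq_primitive_sub hf)]
  exact continuous_const.mul (hF.sub (hF.comp (continuous_sub_right δ)))

theorem hasDerivAt_boxAvg (hf : Continuous f) (x : ℝ) :
    HasDerivAt (boxAvg δ f) (δ⁻¹ * (f x - f (x - δ))) x := by
  rw [funext (boxAvg_eq_primitive_sub fun a b => hf.intervalIntegrable a b)]
  exact (((hf.integral_hasStrictDerivAt 0 x).hasDerivAt).sub
    ((hf.integral_hasStrictDerivAt 0 (x - δ)).hasDerivAt.comp_sub_const x δ)).const_mul _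

theorem deriv_boxAvg (hf : Continuous f) :
    deriv (boxAvg δ f) = fun x => δ⁻¹ * (f x - f (x - δ)) :=
  funext fun x => (hasDerivAt_boxAvg hf x).deriv

theorem contDiff_boxAvg {k : ℕ} (hf : ContDiff ℝ k f) : ContDiff ℝ (k + 1) (boxAvg δ f) := by
  refine contDiff_succ_iff_deriv.2
    ⟨fun x => (hasDerivAt_boxAvg hf.continuous x).differentiableAt, by simp, ?_⟩
  rw [deriv_boxAvg hf.continuous]
  exact contDiff_const.mul (hf.sub (hf.comp (contDiff_id.sub contDiff_const)))

theorem iteratedDeriv_succ_boxAvg {k : ℕ} (hf : ContDiff ℝ k f) (x : ℝ) :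
    iteratedDeriv (k + 1) (boxAvg δ f) x =
      δ⁻¹ * (iteratedDeriv k f x - iteratedDeriv k f (x - δ)) := by
  have hshift : ContDiff ℝ k fun y => f (y - δ) := hf.comp (contDiff_id.sub contDiff_const)
  rw [iteratedDeriv_succ', deriv_boxAvg hf.continuous, iteratedDeriv_const_mul_field,
    iteratedDeriv_fun_sub hf.contDiffAt hshift.contDiffAt, iteratedDeriv_comp_sub_const]

theorem abs_iteratedDeriv_succ_boxAvg_le {k : ℕ} {M : ℝ} (hδ : 0 < δ) (hf : ContDiff ℝ k f)
    (hM : ∀ x, |iteratedDeriv k f x| ≤ M) (x : ℝ) :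
    |iteratedDeriv (k + 1) (boxAvg δ f) x| ≤ 2 * δ⁻¹ * M := by
  rw [iteratedDeriv_succ_boxAvg hf, abs_mul, abs_of_pos (inv_pos.2 hδ)]
  calc δ⁻¹ * |iteratedDeriv k f x - iteratedDeriv k f (x - δ)|
      ≤ δ⁻¹ * (M + M) := by
        gcongr
        exact (abs_sub _ _).trans (add_le_add (hM x) (hM (x - δ)))
    _ = 2 * δ⁻¹ * M := by ring

end boxAvg

section boxSpline

variable {δ : ℝ}

theorem boxSpline_nonneg (hδ : 0 ≤ δ) (j : ℕ) (x : ℝ) : 0 ≤ boxSpline δ j x := by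
  induction j generalizing x with
  | zero => exact indicator_nonneg (fun _ _ => inv_nonneg.2 hδ) x
  | succ j ih => exact boxAvg_nonneg hδ ih x

theorem integrable_boxSpline (hδ : 0 ≤ δ) (j : ℕ) : Integrable (boxSpline δ j) := by
  induction j with
  | zero =>
    exact (integrable_indicator_iff measurableSet_Ioc).2 (integrableOn_const measure_Ioc_lt_top.ne)
  | succ j ih => exact integrable_boxAvg hδ ih

theorem boxSpline_le (hδ : 0 < δ) (j : ℕ) (x : ℝ) : boxSpline δ j x ≤ δ⁻¹ := by
  induction j generalizing x with
  | zero => exact indicator_apply_le' (fun _ => le_rfl) fun _ => (inv_pos.2 hδ).le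
  | succ j ih =>
    exact boxAvg_le hδ (fun a b => (integrable_boxSpline hδ.le j).intervalIntegrable) ih x

theorem integral_boxSpline (hδ : 0 < δ) (j : ℕ) : ∫ x, boxSpline δ j x = 1 := by
  induction j with
  | zero =>
    simp [boxSpline, integral_indicator_const _ measurableSet_Ioc, hδ.le, hδ.ne']
  | succ j ih => rw [boxSpline, integral_boxAvg hδ (integrable_boxSpline hδ.le j), ih]

theorem support_boxSpline_subset (hδ : 0 ≤ δ) (j : ℕ) :
    (boxSpline δ j).support ⊆ Ioc 0 ((j + 1) * δ) := by
  induction j with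
  | zero => exact support_indicator_subset.trans_eq (by norm_num)
  | succ j ih =>
    refine (support_boxAvg_subset hδ ih).trans_eq ?_
    push_cast
    ring_nf

theorem contDiff_boxSpline (hδ : 0 ≤ δ) (j : ℕ) : ContDiff ℝ j (boxSpline δ (j + 1)) := by
  induction j with
  | zero =>
    exact contDiff_zero.2
      (continuous_boxAvg fun a b => (integrable_boxSpline hδ 0).intervalIntegrable)
  | succ j ih => exact_mod_cast contDiff_boxAvg ih

theorem abs_iteratedDeriv_boxSpline_le (hδ : 0 < δ) (k j : ℕ) (x : ℝ) :
    |iteratedDeriv k (boxSpline δ (k + j + 1)) x| ≤ δ⁻¹ * (2 * δ⁻¹) ^ k := by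
  induction k generalizing x with
  | zero =>
    simpa [abs_of_nonneg (boxSpline_nonneg hδ.le _ x)] using boxSpline_le hδ _ x
  | succ k ih =>
    have hsmooth : ContDiff ℝ k (boxSpline δ (k + j + 1)) :=
      (contDiff_boxSpline hδ.le (k + j)).of_le (by exact_mod_cast Nat.le_add_right k j)
    rw [show k + 1 + j + 1 = k + j + 1 + 1 by omega]
    refine (abs_iteratedDeriv_succ_boxAvg_le hδ hsmooth ih x).trans_eq ?_
    ring

end boxSpline

theorem add_two_pow_le_exp_three_mul_pow {m k : ℕ} (hm : 2 ≤ m) (hk : k ≤ m) :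
    ((m : ℝ) + 2) ^ (k + 1) ≤ exp 3 * (m : ℝ) ^ (k + 1) := by
  have hm' : (2 : ℝ) ≤ m := by exact_mod_cast hm
  have hk' : (k : ℝ) ≤ m := by exact_mod_cast hk
  have hbase : (m : ℝ) + 2 ≤ m * exp (2 / m) := by
    calc (m : ℝ) + 2 = m * (2 / m + 1) := by field_simp; ring
      _ ≤ m * exp (2 / m) := by gcongr; exact add_one_le_exp _
  have hexponent : (k + 1 : ℝ) * (2 / m) ≤ 3 := by
    calc (k + 1 : ℝ) * (2 / m) ≤ (m + 1) * (2 / m) := by gcongr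
      _ = 2 + 2 / m := by field_simp
      _ ≤ 3 := by linarith [(div_le_one (by linarith)).2 hm']
  calc ((m : ℝ) + 2) ^ (k + 1) ≤ (m * exp (2 / m)) ^ (k + 1) := by gcongr
    _ = exp ((k + 1 : ℝ) * (2 / m)) * (m : ℝ) ^ (k + 1) := by
      rw [mul_pow, ← exp_nat_mul]; push_cast; ring
    _ ≤ exp 3 * (m : ℝ) ^ (k + 1) := by gcongr

theorem exp_three_lt_twenty_one : exp 3 < 21 := by
  have h : exp 3 = exp 1 ^ 3 := by rw [← exp_nat_mul]; norm_num
  rw [h]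
  calc exp 1 ^ 3 < 2.7182818286 ^ 3 := by gcongr; exact exp_one_lt_d9
    _ < 21 := by norm_num

/-- For every integer `m ≥ 2` there is a nonnegative bump `g` supported in `[0,1]`, with
`∫₀¹ g = 1`, `m` times continuously differentiable, and `|g^{(k)}| ≤ A (2m)^{k+1}` for all
`k ≤ m`, with `A` an absolute constant. -/
theorem exists_bump_function :
    ∃ A : ℝ, 0 < A ∧ ∀ m : ℕ, 2 ≤ m →
      ∃ g : ℝ → ℝ,
        (∀ x, 0 ≤ g x) ∧
        Function.support g ⊆ Set.Icc 0 1 ∧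
        (∫ x in (0 : ℝ)..1, g x) = 1 ∧
        ContDiff ℝ m g ∧
        ∀ k ≤ m, ∀ x : ℝ, |iteratedDeriv k g x| ≤ A * (2 * (m : ℝ)) ^ (k + 1) := by
  refine ⟨11, by norm_num, fun m hm => ?_⟩
  set δ : ℝ := ((m : ℝ) + 2)⁻¹ with hδ_def
  have hδ : 0 < δ := by positivity
  have hsupp : (boxSpline δ (m + 1)).support ⊆ Ioc 0 1 := by
    refine (support_boxSpline_subset hδ.le (m + 1)).trans_eq ?_
    congr 1
    rw [hδ_def]
    push_cast
    field_simp
    ring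
  refine ⟨boxSpline δ (m + 1), boxSpline_nonneg hδ.le _, hsupp.trans Ioc_subset_Icc_self,
    by rw [integral_eq_integral_of_support_subset hsupp, integral_boxSpline hδ],
    contDiff_boxSpline hδ.le m, fun k hk x => ?_⟩
  have hbound := abs_iteratedDeriv_boxSpline_le hδ k (m - k) x
  rw [show k + (m - k) + 1 = m + 1 by omega] at hbound
  calc |iteratedDeriv k (boxSpline δ (m + 1)) x| ≤ δ⁻¹ * (2 * δ⁻¹) ^ k := hbound
    _ = 2 ^ k * ((m : ℝ) + 2) ^ (k + 1) := by rw [hδ_def, inv_inv, mul_pow]; ring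
    _ ≤ 2 ^ k * (exp 3 * (m : ℝ) ^ (k + 1)) := by
      gcongr; exact add_two_pow_le_exp_three_mul_pow hm hk
    _ ≤ 2 ^ k * (22 * (m : ℝ) ^ (k + 1)) := by gcongr; linarith [exp_three_lt_twenty_one]
    _ = 11 * (2 * (m : ℝ)) ^ (k + 1) := by ring
end

section
/- For g(x) = C 4^{m+1} x^{m+1}(1−x)^{m+1} on [0,1] (zero elsewhere) with C chosen so that ∫₀¹ g = 1, the normalizing constant satisfies 1 ≤ C ≤ 2e√m for all integers m ≥ 2. -/
/-! Writing `4x(1-x) = 1 - (2x-1)²`, Bernoulli's inequality gives `(4x(1-x))^(m+1) ≥ 1/2` on the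
interval `|x - 1/2| ≤ 1/(4√m)` of length `1/(2√m)`. Hence `1/(4√m) ≤ ∫₀¹ g / C ≤ 1`, and
`C ≤ 4√m ≤ 2e√m`. -/

open MeasureTheory intervalIntegral Real Set

def bump (n : ℕ) (x : ℝ) : ℝ := (4 * x * (1 - x)) ^ n

namespace bump

variable {n : ℕ} {x : ℝ}

theorem continuous (n : ℕ) : Continuous (bump n) := by
  unfold bump; fun_prop

theorem nonneg (hx : x ∈ Icc 0 1) : 0 ≤ bump n x :=
  pow_nonneg (by nlinarith [hx.1, hx.2]) n

theorem le_one (hx : x ∈ Icc 0 1) : bump n x ≤ 1 :=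
  pow_le_one₀ (by nlinarith [hx.1, hx.2]) (by nlinarith [sq_nonneg (2 * x - 1)])

theorem one_sub_mul_sq_le (n : ℕ) (hx : (2 * x - 1) ^ 2 ≤ 2) :
    1 - n * (2 * x - 1) ^ 2 ≤ bump n x := by
  have bernoulli := one_add_mul_le_pow (a := -(2 * x - 1) ^ 2) (by linarith) n
  rw [bump, show 4 * x * (1 - x) = 1 + -(2 * x - 1) ^ 2 by ring]
  linarith

end bump

theorem integral_bump_le_one (n : ℕ) : ∫ x in (0 : ℝ)..1, bump n x ≤ 1 := by
  simpa using integral_mono_on (μ := volume) zero_le_one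
    ((bump.continuous n).intervalIntegrable 0 1) intervalIntegrable_const fun x hx => bump.le_one hx

theorem two_mul_mul_le_integral_bump (n : ℕ) {δ : ℝ} (hδ₀ : 0 ≤ δ) (hδ : δ ≤ 1 / 2) :
    2 * δ * (1 - 4 * n * δ ^ 2) ≤ ∫ x in (0 : ℝ)..1, bump n x := by
  calc 2 * δ * (1 - 4 * n * δ ^ 2)
      = ∫ _ in (1 / 2 - δ)..(1 / 2 + δ), (1 - 4 * n * δ ^ 2) := by
        rw [intervalIntegral.integral_const, smul_eq_mul]; ring
    _ ≤ ∫ x in (1 / 2 - δ)..(1 / 2 + δ), bump n x := by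
        refine integral_mono_on (by linarith) intervalIntegrable_const
          ((bump.continuous n).intervalIntegrable _ _) fun x hx => ?_
        have hsq : (2 * x - 1) ^ 2 ≤ 4 * δ ^ 2 := by nlinarith [hx.1, hx.2]
        have := bump.one_sub_mul_sq_le n (x := x) (by nlinarith)
        nlinarith [n.cast_nonneg (α := ℝ)]
    _ ≤ ∫ x in (0 : ℝ)..1, bump n x :=
        integral_mono_interval (by linarith) (by linarith) (by linarith)
          (ae_restrict_of_forall_mem measurableSet_Ioc fun _ hx =>
            bump.nonneg (Ioc_subset_Icc_self hx))
          ((bump.continuous n).intervalIntegrable 0 1)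

theorem one_div_four_mul_sqrt_le_integral_bump {m : ℕ} (hm : 1 ≤ m) :
    1 / (4 * √m) ≤ ∫ x in (0 : ℝ)..1, bump (m + 1) x := by
  have hs : 1 ≤ √(m : ℝ) := one_le_sqrt.mpr (by exact_mod_cast hm)
  have hs_sq : √(m : ℝ) ^ 2 = m := sq_sqrt m.cast_nonneg
  refine le_trans ?_ (two_mul_mul_le_integral_bump (m + 1) (δ := 1 / (4 * √m)) (by positivity)
    (by rw [div_le_div_iff₀ (by positivity) (by norm_num)]; linarith))
  set s := √(m : ℝ)
  push_cast
  rw [← hs_sq]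
  field_simp
  nlinarith

/-- For `g(x) = C·4^{m+1} x^{m+1}(1-x)^{m+1}` on `[0,1]` with `∫₀¹ g = 1`, the normalizing
constant satisfies `1 ≤ C ≤ 2e√m` for all integers `m ≥ 2`. -/
theorem bump_normalizing_constant_bounds (m : ℕ) (hm : 2 ≤ m) (C : ℝ)
    (hC : (∫ x in (0 : ℝ)..1, C * 4 ^ (m + 1) * x ^ (m + 1) * (1 - x) ^ (m + 1)) = 1) :
    1 ≤ C ∧ C ≤ 2 * Real.exp 1 * Real.sqrt m := by
  set J := ∫ x in (0 : ℝ)..1, bump (m + 1) x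
  have hCJ : C * J = 1 := by
    rw [← hC, ← intervalIntegral.integral_const_mul]
    congr 1; ext x; simp only [bump, mul_pow]; ring
  have hJ_lower : 1 / (4 * √m) ≤ J := one_div_four_mul_sqrt_le_integral_bump (by omega)
  have hJ_pos : 0 < J := lt_of_lt_of_le (by positivity) hJ_lower
  have hC_eq : C = 1 / J := by rw [eq_div_iff hJ_pos.ne', hCJ]
  have he : 2 ≤ exp 1 := by linarith [add_one_le_exp 1]
  constructor
  · rw [hC_eq, le_div_iff₀ hJ_pos, one_mul]
    exact integral_bump_le_one (m + 1)
  · calc C = 1 / J := hC_eq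
      _ ≤ 1 / (1 / (4 * √m)) := one_div_le_one_div_of_le (by positivity) hJ_lower
      _ = 4 * √m := one_div_one_div _
      _ ≤ 2 * exp 1 * √m := by nlinarith [sqrt_nonneg (m : ℝ)]
end

section
/- For every integer m ≥ 2 there exists a function b : ℝ → ℝ such that supp(b) ⊆ [−2,2], b(x) = 1 for x ∈ [−1,1], b is m+1 times continuously differentiable, and there is an absolute constant A such that |b^{(k)}(x)| ≤ A(2m)^k for all k ≤ m. -/
open MeasureTheory

/-! Averaging over windows of half-width `c` gains one derivative per step: the derivative of
`x ↦ (2c)⁻¹ ∫_{x-c}^{x+c} f` is the difference quotient `(f (x + c) - f (x - c)) / (2c)`, so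
the `k`-th derivative of a `k`-fold average of a function bounded by `1` is bounded by `c⁻ᵏ`,
while each average widens the support and shrinks the plateau by `c`. Averaging the indicator of
`[-3/2, 3/2]` `m + 2` times with `c = 1 / (2(m + 2))` gives a `C^{m+1}` function supported in
`[-2, 2]`, equal to `1` on `[-1, 1]`, whose derivatives of order `k ≤ m` are bounded by
`(2(m + 2))ᵏ ≤ e² (2m)ᵏ`. -/

noncomputable def movingAverage (c : ℝ) (f : ℝ → ℝ) (x : ℝ) : ℝ :=
  (2 * c)⁻¹ * ∫ t in (x - c)..(x + c), f t

section MovingAverage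

open Set Function

variable {c : ℝ} {f : ℝ → ℝ}

lemma movingAverage_eq_sub_primitive (hf : LocallyIntegrable f volume) (x : ℝ) :
    movingAverage c f x =
      (2 * c)⁻¹ * ((∫ t in (0 : ℝ)..(x + c), f t) - ∫ t in (0 : ℝ)..(x - c), f t) := by
  have hf' (a b : ℝ) : IntervalIntegrable f volume a b :=
    (hf.integrableOn_isCompact isCompact_uIcc).intervalIntegrable
  rw [intervalIntegral.integral_interval_sub_left (hf' _ _) (hf' _ _), movingAverage]

lemma continuous_movingAverage (hf : LocallyIntegrable f volume) :
    Continuous (movingAverage c f) := by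
  have hF := intervalIntegral.continuous_primitive
    (fun a b => (hf.integrableOn_isCompact isCompact_uIcc).intervalIntegrable) 0
  rw [funext (movingAverage_eq_sub_primitive hf)]
  fun_prop

lemma hasDerivAt_movingAverage (hf : Continuous f) (x : ℝ) :
    HasDerivAt (movingAverage c f) ((2 * c)⁻¹ * (f (x + c) - f (x - c))) x := by
  rw [funext (movingAverage_eq_sub_primitive hf.locallyIntegrable)]
  have hF (y : ℝ) := (hf.integral_hasStrictDerivAt 0 y).hasDerivAt
  exact (((hF _).comp_add_const x c).sub ((hF _).comp_sub_const x c)).const_mul _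

lemma deriv_movingAverage (hf : Continuous f) :
    deriv (movingAverage c f) = fun x => (2 * c)⁻¹ * (f (x + c) - f (x - c)) :=
  funext fun x => (hasDerivAt_movingAverage hf x).deriv

lemma contDiff_movingAverage {k : ℕ} (hf : ContDiff ℝ k f) :
    ContDiff ℝ (k + 1) (movingAverage c f) := by
  rw [contDiff_succ_iff_deriv, deriv_movingAverage hf.continuous]
  exact ⟨fun x => (hasDerivAt_movingAverage hf.continuous x).differentiableAt, by simp,
    by fun_prop⟩

lemma iteratedDeriv_succ_movingAverage {k : ℕ} (hf : ContDiff ℝ k f) (x : ℝ) :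
    iteratedDeriv (k + 1) (movingAverage c f) x =
      (2 * c)⁻¹ * (iteratedDeriv k f (x + c) - iteratedDeriv k f (x - c)) := by
  rw [iteratedDeriv_succ', deriv_movingAverage hf.continuous, iteratedDeriv_const_mul_field,
    iteratedDeriv_fun_sub (by fun_prop) (by fun_prop), iteratedDeriv_comp_add_const,
    iteratedDeriv_comp_sub_const]

lemma abs_movingAverage_le (hc : 0 < c) {M : ℝ} (hM : ∀ x, |f x| ≤ M) (x : ℝ) :
    |movingAverage c f x| ≤ M := by
  have h := intervalIntegral.norm_integral_le_of_norm_le_const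
    (a := x - c) (b := x + c) fun t _ => (Real.norm_eq_abs (f t)).trans_le (hM t)
  rw [Real.norm_eq_abs, show |x + c - (x - c)| = 2 * c by rw [abs_of_pos (by linarith)]; ring] at h
  rwa [movingAverage, abs_mul, abs_inv, abs_of_pos (by positivity),
    inv_mul_le_iff₀ (by positivity), mul_comm]

lemma movingAverage_eq_of_eqOn (hc : 0 < c) {x y : ℝ}
    (h : EqOn f (fun _ => y) (Icc (x - c) (x + c))) : movingAverage c f x = y := by
  have hx : x - c ≤ x + c := by linarith
  rw [movingAverage, intervalIntegral.integral_congr (uIcc_of_le hx ▸ h)]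
  simp only [intervalIntegral.integral_const, smul_eq_mul]
  field_simp
  ring

lemma support_movingAverage_subset (hc : 0 < c) {a : ℝ} (h : support f ⊆ Icc (-a) a) :
    support (movingAverage c f) ⊆ Icc (-(a + c)) (a + c) := by
  intro x hx
  by_contra hx'
  refine hx (movingAverage_eq_of_eqOn hc fun t ht => notMem_support.1 fun hft => hx' ?_)
  exact ⟨by linarith [(h hft).1, ht.2], by linarith [(h hft).2, ht.1]⟩

lemma eqOn_one_movingAverage (hc : 0 < c) {a : ℝ} (h : EqOn f 1 (Icc (-a) a)) :
    EqOn (movingAverage c f) 1 (Icc (-(a - c)) (a - c)) := fun x hx =>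
  movingAverage_eq_of_eqOn hc fun t ht => h ⟨by linarith [hx.1, ht.1], by linarith [hx.2, ht.2]⟩

lemma support_iterate_movingAverage_subset (hc : 0 < c) {a : ℝ} (h : support f ⊆ Icc (-a) a)
    (n : ℕ) : support ((movingAverage c)^[n] f) ⊆ Icc (-(a + n * c)) (a + n * c) := by
  induction n with
  | zero => simpa using h
  | succ n ih =>
    rw [iterate_succ_apply']
    convert support_movingAverage_subset hc ih using 2 <;> push_cast <;> ring

lemma eqOn_one_iterate_movingAverage (hc : 0 < c) {a : ℝ} (h : EqOn f 1 (Icc (-a) a)) (n : ℕ) :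
    EqOn ((movingAverage c)^[n] f) 1 (Icc (-(a - n * c)) (a - n * c)) := by
  induction n with
  | zero => simpa using h
  | succ n ih =>
    rw [iterate_succ_apply']
    convert eqOn_one_movingAverage hc ih using 2 <;> push_cast <;> ring

lemma abs_iterate_movingAverage_le (hc : 0 < c) {M : ℝ} (hM : ∀ x, |f x| ≤ M) (n : ℕ)
    (x : ℝ) : |(movingAverage c)^[n] f x| ≤ M := by
  induction n generalizing x with
  | zero => exact hM x
  | succ n ih => rw [iterate_succ_apply']; exact abs_movingAverage_le hc ih x

lemma continuous_iterate_succ_movingAverage (hf : LocallyIntegrable f volume) (n : ℕ) :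
    Continuous ((movingAverage c)^[n + 1] f) := by
  induction n with
  | zero => exact continuous_movingAverage hf
  | succ n ih => rw [iterate_succ_apply']; exact continuous_movingAverage ih.locallyIntegrable

lemma contDiff_iterate_movingAverage (hf : Continuous f) (k : ℕ) :
    ContDiff ℝ k ((movingAverage c)^[k] f) := by
  induction k with
  | zero => exact contDiff_zero.2 hf
  | succ k ih => rw [iterate_succ_apply']; exact_mod_cast contDiff_movingAverage ih

lemma abs_iteratedDeriv_iterate_movingAverage_le (hc : 0 < c) (hf : Continuous f) {M : ℝ}
    (hM : ∀ x, |f x| ≤ M) (k : ℕ) (x : ℝ) :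
    |iteratedDeriv k ((movingAverage c)^[k] f) x| ≤ M / c ^ k := by
  induction k generalizing x with
  | zero => simpa using hM x
  | succ k ih =>
    rw [iterate_succ_apply', iteratedDeriv_succ_movingAverage (contDiff_iterate_movingAverage hf k)]
    calc _ ≤ (2 * c)⁻¹ * (|iteratedDeriv k ((movingAverage c)^[k] f) (x + c)|
          + |iteratedDeriv k ((movingAverage c)^[k] f) (x - c)|) := by
          rw [abs_mul, abs_of_pos (by positivity)]
          gcongr
          exact abs_sub _ _
      _ ≤ (2 * c)⁻¹ * (M / c ^ k + M / c ^ k) := by gcongr <;> exact ih _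
      _ = M / c ^ (k + 1) := by field_simp; ring

end MovingAverage

lemma two_mul_add_two_pow_le_exp_two_mul {m k : ℕ} (hm : 0 < m) (hk : k ≤ m) :
    (2 * ((m : ℝ) + 2)) ^ k ≤ Real.exp 2 * (2 * m) ^ k := by
  have hm' : (0 : ℝ) < m := by exact_mod_cast hm
  have hk' : (k : ℝ) ≤ m := by exact_mod_cast hk
  have h : (1 + 2 / (m : ℝ)) ^ k ≤ Real.exp 2 :=
    calc (1 + 2 / (m : ℝ)) ^ k ≤ Real.exp (2 / m) ^ k := by
          gcongr
          linarith [Real.add_one_le_exp (2 / (m : ℝ))]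
      _ = Real.exp (k * (2 / m)) := (Real.exp_nat_mul _ k).symm
      _ ≤ Real.exp 2 := by
          gcongr
          rw [mul_div_assoc', div_le_iff₀ hm']
          linarith
  calc (2 * ((m : ℝ) + 2)) ^ k = (1 + 2 / (m : ℝ)) ^ k * (2 * m) ^ k := by
        rw [← mul_pow]; congr 1; field_simp
    _ ≤ Real.exp 2 * (2 * m) ^ k := by gcongr

/-- For every integer `m ≥ 2` there is a bump function `b` supported in `[-2,2]`, equal to `1`
on `[-1,1]`, `m+1` times continuously differentiable, with `|b^{(k)}| ≤ A(2m)^k` for all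
`k ≤ m`, with `A` an absolute constant. -/
theorem exists_plateau_bump :
    ∃ A : ℝ, 0 < A ∧ ∀ m : ℕ, 2 ≤ m →
      ∃ b : ℝ → ℝ,
        Function.support b ⊆ Set.Icc (-2 : ℝ) 2 ∧
        (∀ x ∈ Set.Icc (-1 : ℝ) 1, b x = 1) ∧
        ContDiff ℝ (m + 1) b ∧
        ∀ k ≤ m, ∀ x : ℝ, |iteratedDeriv k b x| ≤ A * (2 * (m : ℝ)) ^ k := by
  refine ⟨Real.exp 2, Real.exp_pos 2, fun m hm => ?_⟩
  set c : ℝ := (2 * ((m : ℝ) + 2))⁻¹ with hc_def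
  have hc : 0 < c := by positivity
  have hmc : ((m + 2 : ℕ) : ℝ) * c = 1 / 2 := by rw [hc_def]; push_cast; field_simp
  set g : ℝ → ℝ := (Set.Icc (-(3 / 2) : ℝ) (3 / 2)).indicator 1
  have hg_int : LocallyIntegrable g volume :=
    (locallyIntegrable_const 1).indicator measurableSet_Icc
  have hg_le : ∀ x, |g x| ≤ 1 := fun x => by
    by_cases hx : x ∈ Set.Icc (-(3 / 2) : ℝ) (3 / 2) <;> simp [g, hx]
  refine ⟨(movingAverage c)^[m + 2] g, ?_, fun x hx => ?_, ?_, fun k hk x => ?_⟩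
  · refine (support_iterate_movingAverage_subset hc Set.support_indicator_subset _).trans ?_
    exact Set.Icc_subset_Icc (by linarith) (by linarith)
  · refine eqOn_one_iterate_movingAverage hc (fun y hy => Set.indicator_of_mem hy 1) _ ?_
    exact ⟨by linarith [hx.1], by linarith [hx.2]⟩
  · rw [show m + 2 = (m + 1) + 1 from rfl, Function.iterate_add_apply]
    exact_mod_cast contDiff_iterate_movingAverage (continuous_iterate_succ_movingAverage hg_int 0)
      (m + 1)
  · rw [show m + 2 = k + (m + 1 - k + 1) by omega, Function.iterate_add_apply]
    calc _ ≤ 1 / c ^ k := abs_iteratedDeriv_iterate_movingAverage_le hc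
            (continuous_iterate_succ_movingAverage hg_int _)
            (abs_iterate_movingAverage_le hc hg_le _) k x
      _ = (2 * ((m : ℝ) + 2)) ^ k := by rw [hc_def, one_div, inv_pow, inv_inv]
      _ ≤ Real.exp 2 * (2 * m) ^ k := two_mul_add_two_pow_le_exp_two_mul (by omega) hk
end
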